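/- arXiv:1908.07447 — 4 statements merged into one kernel-verified Lean document; each statement's English description precedes it below -/
import Mathlib

section
/- Let G be a graph, C a cycle in G, and P a path in G vertex-disjoint from C. If there exists an edge (u, v) of C such that u is adjacent to the first vertex of P and v is adjacent to the last vertex of P, then G contains a cycle whose vertex set is V(C) ∪ V(P). -/
/-!
Rotating C to start at u and orienting it along the edge uv, C reads u, v, …, u; dropping that
edge leaves a path Q from v to u through all of V(C). The closed walk u → P → Q then glues the
vertex-disjoint paths u·P and q·Q, and is a cycle because Q (as u ≠ v) is not a single vertex.
-/

namespace SimpleGraph.Walk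

variable {V : Type*} {G : SimpleGraph V}

lemma mem_support_tail_iff_of_not_nil {u a : V} {C : G.Walk u u} (hC : ¬ C.Nil) :
    a ∈ C.tail.support ↔ a ∈ C.support := by
  rw [← C.cons_support_tail hC, List.mem_cons, iff_or_self]
  rintro rfl
  exact C.tail.end_mem_support

lemma IsCycle.exists_isPath_of_mem_edges {z u v : V} {C : G.Walk z z} (hC : C.IsCycle)
    (he : s(u, v) ∈ C.edges) :
    ∃ Q : G.Walk v u, Q.IsPath ∧ ∀ a, a ∈ Q.support ↔ a ∈ C.support := by
  classical
  have hu : u ∈ C.support := C.fst_mem_support_of_mem_edges he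
  have hadj : (C.rotate u hu).toSubgraph.Adj u v := by
    rwa [toSubgraph_rotate, adj_toSubgraph_iff_mem_edges]
  obtain ⟨C', hC', rfl, hverts⟩ := (hC.rotate hu).exists_isCycle_snd_verts_eq hadj
  rw [toSubgraph_rotate, verts_toSubgraph, verts_toSubgraph] at hverts
  refine ⟨C'.tail, hC'.isPath_tail, fun a => ?_⟩
  rw [mem_support_tail_iff_of_not_nil hC'.not_nil]
  exact Set.ext_iff.mp hverts a

lemma IsPath.isCycle_cons_append_cons {u v p q : V} {P : G.Walk p q} {Q : G.Walk v u}
    (hP : P.IsPath) (hQ : Q.IsPath) (hdisj : P.support.Disjoint Q.support) (huv : u ≠ v)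
    (hup : G.Adj u p) (hqv : G.Adj q v) : ((cons hup P).append (cons hqv Q)).IsCycle := by
  refine IsPath.isCycle_append ?_ ?_ hdisj (Or.inr ?_)
  · exact hP.cons fun hu => hdisj hu Q.end_mem_support
  · exact hQ.cons fun hq => hdisj P.end_mem_support hq
  · exact Nat.succ_lt_succ (not_nil_iff_lt_length.mp (not_nil_of_ne huv.symm))

end SimpleGraph.Walk

open SimpleGraph.Walk

/-- a cycle and a vertex-disjoint path whose endpoints adjoin an
edge of the cycle can be combined into a cycle on V(C) ∪ V(P). -/
theorem combine_cycle_path_into_cycle {V : Type*} (G : SimpleGraph V)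
    {z p q : V} (C : G.Walk z z) (P : G.Walk p q)
    (hC : C.IsCycle) (hP : P.IsPath)
    (hdisj : ∀ v, v ∈ C.support → v ∉ P.support)
    (u v : V) (he : s(u, v) ∈ C.edges)
    (hup : G.Adj u p) (hvq : G.Adj v q) :
    ∃ (w : V) (C' : G.Walk w w), C'.IsCycle ∧
      ∀ a, a ∈ C'.support ↔ (a ∈ C.support ∨ a ∈ P.support) := by
  obtain ⟨Q, hQ, hQC⟩ := hC.exists_isPath_of_mem_edges he
  have hPQ : P.support.Disjoint Q.support := fun a haP haQ => hdisj a ((hQC a).mp haQ) haP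
  refine ⟨u, (cons hup P).append (cons hvq.symm Q),
    hP.isCycle_cons_append_cons hQ hPQ (C.adj_of_mem_edges he).ne hup hvq.symm, fun a => ?_⟩
  simp only [mem_support_append_iff, support_cons, List.mem_cons, ← hQC]
  constructor
  · rintro ((rfl | ha) | rfl | ha)
    exacts [Or.inl Q.end_mem_support, Or.inr ha, Or.inr P.end_mem_support, Or.inl ha]
  · rintro (ha | ha)
    exacts [Or.inr (Or.inr ha), Or.inl (Or.inr ha)]
end

section
/- In the C-shaped supergrid graph C(m, n; k, l; c, d) with a = m − k = 1, the vertex v = (1, c + 1) is a cut vertex; consequently, if s and t both satisfy sy, ty ≤ c, or both satisfy sy, ty > c + l, then there is no Hamiltonian (s,t)-path in C(m, n; k, l; c, d). -/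
/-!
Every vertex of `C(m, n; k, l; c, d)` in row `c + 1` lies in the hole except `v = (1, c + 1)`,
because the hole starts in column `m - k + 1 = 2`. Supergrid edges change the row by at most one,
so once `v` is removed no edge joins the rows `≤ c` to the rows `≥ c + 2`. A Hamiltonian
`(s, t)`-path passes through `v` exactly once, so every other vertex is joined to `s` or to `t`
by a subpath avoiding `v`; if `s` and `t` lie on the same side, the other side is never reached.
-/

/-- The vertex set of the C-shaped supergrid graph C(m,n;k,l;c,d). -/
def CSet (m n k l c : ℤ) : Set (ℤ × ℤ) :=
  {p | (1 ≤ p.1 ∧ p.1 ≤ m ∧ 1 ≤ p.2 ∧ p.2 ≤ n) ∧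
    ¬ (m - k + 1 ≤ p.1 ∧ p.1 ≤ m ∧ c + 1 ≤ p.2 ∧ p.2 ≤ c + l)}

/-- The C-shaped supergrid graph C(m,n;k,l;c,d). -/
def CGraph (m n k l c : ℤ) : SimpleGraph (CSet m n k l c) where
  Adj u v := u ≠ v ∧ |(u : ℤ × ℤ).1 - (v : ℤ × ℤ).1| ≤ 1 ∧
    |(u : ℤ × ℤ).2 - (v : ℤ × ℤ).2| ≤ 1
  symm := by
    constructor
    rintro u v ⟨h, h1, h2⟩
    exact ⟨h.symm, by rw [abs_sub_comm]; exact h1, by rw [abs_sub_comm]; exact h2⟩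
  loopless := by constructor; rintro u ⟨h, -⟩; exact h rfl

namespace SimpleGraph

variable {V : Type*} {G : SimpleGraph V}

def Separates (G : SimpleGraph V) (v : V) (P : V → Prop) : Prop :=
  ∀ ⦃u w⦄, G.Adj u w → u ≠ v → w ≠ v → (P u ↔ P w)

namespace Separates

variable {v : V} {P : V → Prop}

theorem iff_of_walk (h : G.Separates v P) {x y : V} (p : G.Walk x y) (hp : v ∉ p.support) :
    P x ↔ P y := by
  induction p with
  | nil => rfl
  | cons hadj q ih =>
    rw [Walk.support_cons, List.mem_cons, not_or] at hp
    exact (h hadj (Ne.symm hp.1) (fun hv => hp.2 (hv ▸ q.start_mem_support))).trans (ih hp.2)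

theorem not_connected_induce (h : G.Separates v P) {x y : V} (hx : x ≠ v) (hy : y ≠ v)
    (hPx : P x) (hPy : ¬P y) : ¬(G.induce {u | u ≠ v}).Connected := by
  intro hconn
  obtain ⟨p⟩ := hconn.preconnected ⟨x, hx⟩ ⟨y, hy⟩
  have hv : v ∉ (p.map (Embedding.induce {u | u ≠ v}).toHom).support := by
    rw [Walk.support_map, List.mem_map]
    rintro ⟨u, -, hu⟩
    exact u.2 hu
  exact hPy ((h.iff_of_walk _ hv).mp hPx)

theorem not_isHamiltonian [DecidableEq V] (h : G.Separates v P) {s t z : V} (p : G.Walk s t)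
    (hz : z ≠ v) (hs : ¬(P s ↔ P z)) (ht : ¬(P z ↔ P t)) : ¬p.IsHamiltonian := by
  intro hp
  have hzp := hp.mem_support z
  have hv_take : v ∈ (p.takeUntil z hzp).support := by
    by_contra hv
    exact hs (h.iff_of_walk _ hv)
  have hv_drop : v ∈ (p.dropUntil z hzp).support := by
    by_contra hv
    exact ht (h.iff_of_walk _ hv)
  have hpath : ((p.takeUntil z hzp).append (p.dropUntil z hzp)).IsPath := by
    rw [p.take_spec hzp]
    exact hp.isPath
  exact Walk.IsPath.ne_of_mem_support_of_append hpath hz.symm hv_take hv_drop rfl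

end Separates

end SimpleGraph

theorem CSet.coe_eq_of_snd_eq {m n k l c : ℤ} (hl : 1 ≤ l) (ha : m - k = 1)
    (z : CSet m n k l c) (hz : (z : ℤ × ℤ).2 = c + 1) : (z : ℤ × ℤ) = (1, c + 1) := by
  obtain ⟨⟨h1, h2, -, -⟩, hhole⟩ := z.2
  exact Prod.ext (by omega) hz

theorem CGraph.separates {m n k l c : ℤ} (hl : 1 ≤ l) (ha : m - k = 1)
    (v : CSet m n k l c) (hv : (v : ℤ × ℤ) = (1, c + 1)) :
    (CGraph m n k l c).Separates v (fun u => (u : ℤ × ℤ).2 ≤ c) := by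
  rintro u w ⟨-, -, hy⟩ hu hw
  have hu' : (u : ℤ × ℤ).2 ≠ c + 1 := fun h =>
    hu (Subtype.ext ((CSet.coe_eq_of_snd_eq hl ha u h).trans hv.symm))
  have hw' : (w : ℤ × ℤ).2 ≠ c + 1 := fun h =>
    hw (Subtype.ext ((CSet.coe_eq_of_snd_eq hl ha w h).trans hv.symm))
  rw [abs_le] at hy
  omega

theorem Cshaped_a_eq_one_cut_vertex_general (m n k l c d : ℤ)
    (hm : 2 ≤ m) (hl : 1 ≤ l) (hc : 1 ≤ c)
    (hd : d = n - l - c) (hd1 : 1 ≤ d) (ha : m - k = 1)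
    (v : CSet m n k l c) (hv : (v : ℤ × ℤ) = (1, c + 1)) :
    (¬ ((CGraph m n k l c).induce {u | u ≠ v}).Connected) ∧
    (∀ s t : CSet m n k l c, s ≠ t →
      (((s : ℤ × ℤ).2 ≤ c ∧ (t : ℤ × ℤ).2 ≤ c) ∨
        (c + l < (s : ℤ × ℤ).2 ∧ c + l < (t : ℤ × ℤ).2)) →
      ¬ ∃ p : (CGraph m n k l c).Walk s t, p.IsHamiltonian) := by
  have hsep := CGraph.separates hl ha v hv
  let below : CSet m n k l c := ⟨(1, 1), ⟨by omega, by omega⟩⟩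
  let above : CSet m n k l c := ⟨(1, c + l + 1), ⟨by omega, by omega⟩⟩
  have hv₂ : (v : ℤ × ℤ).2 = c + 1 := congrArg Prod.snd hv
  have hbelow : below ≠ v := ne_of_apply_ne (fun u : CSet m n k l c => (u : ℤ × ℤ).2)
    (by dsimp only [below]; omega)
  have habove : above ≠ v := ne_of_apply_ne (fun u : CSet m n k l c => (u : ℤ × ℤ).2)
    (by dsimp only [above]; omega)
  refine ⟨hsep.not_connected_induce hbelow habove hc (by dsimp only [above]; omega), ?_⟩
  rintro s t - (⟨hs, ht⟩ | ⟨hs, ht⟩) ⟨p, hp⟩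
  · exact hsep.not_isHamiltonian p habove (by dsimp only [above]; omega)
      (by dsimp only [above]; omega) hp
  · exact hsep.not_isHamiltonian p hbelow (by dsimp only [below]; omega)
      (by dsimp only [below]; omega) hp

/-- in C(m,n;k,l;c,d) with a = m − k = 1, the vertex (1, c+1) is a
cut vertex, and if s, t both have y-coordinate ≤ c, or both have y-coordinate
> c + l, then there is no Hamiltonian (s,t)-path. -/
theorem Cshaped_a_eq_one_cut_vertex (m n k l c d : ℤ)
    (hm : 2 ≤ m) (hn : 3 ≤ n) (hk : 1 ≤ k) (hl : 1 ≤ l) (hc : 1 ≤ c)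
    (hd : d = n - l - c) (hd1 : 1 ≤ d) (ha : m - k = 1)
    (v : CSet m n k l c) (hv : (v : ℤ × ℤ) = (1, c + 1)) :
    (¬ ((CGraph m n k l c).induce {u | u ≠ v}).Connected) ∧
    (∀ s t : CSet m n k l c, s ≠ t →
      (((s : ℤ × ℤ).2 ≤ c ∧ (t : ℤ × ℤ).2 ≤ c) ∨
        (c + l < (s : ℤ × ℤ).2 ∧ c + l < (t : ℤ × ℤ).2)) →
      ¬ ∃ p : (CGraph m n k l c).Walk s t, p.IsHamiltonian) :=
  Cshaped_a_eq_one_cut_vertex_general m n k l c d hm hl hc hd hd1 ha v hv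
end

section
/- If the C-shaped supergrid graph C(m, n; k, l; c, d) satisfies a = m − k = 1 or contains a vertex of degree 1, then it has no Hamiltonian cycle. -/
/-!
If `a = m - k = 1`, the vertex `(1, c + 1)` is a cut vertex: every other vertex of its row
lies in the removed block, and the second coordinate moves by at most one along an edge, so any
walk from `(1, 1)` to `(1, n)` passes through it. A Hamiltonian cycle leaves the graph connected
after deleting any one vertex, which is impossible. A vertex of degree 1 is impossible too,
since a cycle gives each of its vertices two distinct neighbours.
-/

namespace SimpleGraph.Walk

variable {V : Type*} {G : SimpleGraph V}

lemma IsCycle.ncard_neighborSet_ne_one {u w : V} {p : G.Walk u u} (hp : p.IsCycle)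
    (hw : w ∈ p.support) : (G.neighborSet w).ncard ≠ 1 := by
  intro h
  obtain ⟨b, hb⟩ := Set.ncard_eq_one.1 h
  have hsub : p.toSubgraph.neighborSet w ⊆ {b} := hb ▸ p.toSubgraph.neighborSet_subset w
  have := Set.ncard_le_ncard hsub
  rw [hp.ncard_neighborSet_toSubgraph_eq_two hw, Set.ncard_singleton] at this
  omega

lemma IsHamiltonianCycle.exists_walk_notMem_support [DecidableEq V] {u w x z : V}
    {p : G.Walk u u} (hp : p.IsHamiltonianCycle) (hx : x ≠ w) (hz : z ≠ w) :
    ∃ r : G.Walk x z, w ∉ r.support := by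
  have hq := hp.rotate (hp.mem_support w)
  -- the tail of the cycle rotated to `w` is a Hamiltonian path ending at `w`
  set s := (p.rotate w (hp.mem_support w)).tail
  have hs := hq.isHamiltonian_tail
  have hxs := hs.mem_support x
  have hzs := hs.mem_support z
  refine ⟨(s.takeUntil x hxs).reverse.append (s.takeUntil z hzs), ?_⟩
  rw [mem_support_append_iff, support_reverse, List.mem_reverse, not_or]
  exact ⟨endpoint_notMem_support_takeUntil hs.isPath hxs hx.symm,
    endpoint_notMem_support_takeUntil hs.isPath hzs hz.symm⟩

end SimpleGraph.Walk

section CGraph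

variable {m n k l c : ℤ}

lemma one_mem_cSet {y : ℤ} (hm : 1 ≤ m) (ha : 1 ≤ m - k) (hy : 1 ≤ y) (hyn : y ≤ n) :
    ((1 : ℤ), y) ∈ CSet m n k l c :=
  ⟨⟨le_rfl, hm, hy, hyn⟩, fun h => by omega⟩

lemma fst_eq_one_of_mem_cSet {p : ℤ × ℤ} (ha : m - k = 1) (hp : p ∈ CSet m n k l c)
    (hc : c < p.2) (hcl : p.2 ≤ c + l) : p.1 = 1 := by
  obtain ⟨⟨h1, hm, -, -⟩, hgap⟩ := hp
  by_contra hne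
  exact hgap ⟨by omega, hm, hc, hcl⟩

lemma CGraph.exists_mem_support_snd_eq {x z : CSet m n k l c}
    (r : (CGraph m n k l c).Walk x z) {t : ℤ} (hxt : (x : ℤ × ℤ).2 ≤ t)
    (htz : t ≤ (z : ℤ × ℤ).2) : ∃ u ∈ r.support, (u : ℤ × ℤ).2 = t := by
  induction r with
  | nil => exact ⟨_, List.mem_singleton_self _, le_antisymm hxt htz⟩
  | @cons x y z h r ih =>
    rcases hxt.eq_or_lt with hxt | hxt
    · exact ⟨x, r.cons h |>.start_mem_support, hxt⟩
    · have hy := (abs_le.1 h.2.2).1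
      obtain ⟨u, hu, hut⟩ := ih (by omega) htz
      exact ⟨u, List.mem_cons_of_mem _ hu, hut⟩

end CGraph

theorem Cshaped_no_hamiltonian_cycle_general (m n k l c d : ℤ)
    (hm : 2 ≤ m) (hl : 1 ≤ l) (hc : 1 ≤ c)
    (hd : d = n - l - c) (hd1 : 1 ≤ d)
    (hF6 : m - k = 1 ∨ ∃ w : CSet m n k l c,
      ((CGraph m n k l c).neighborSet w).ncard = 1) :
    ¬ ∃ (v : CSet m n k l c) (cyc : (CGraph m n k l c).Walk v v),
        cyc.IsHamiltonianCycle := by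
  rintro ⟨v, cyc, hcyc⟩
  rcases hF6 with ha | ⟨w, hw⟩
  · have hcol {y : ℤ} (hy : 1 ≤ y) (hyn : y ≤ n) : ((1 : ℤ), y) ∈ CSet m n k l c :=
      one_mem_cSet (by omega) ha.ge hy hyn
    set w₀ : CSet m n k l c := ⟨(1, c + 1), hcol (by omega) (by omega)⟩
    obtain ⟨r, hr⟩ := hcyc.exists_walk_notMem_support (w := w₀)
      (x := ⟨(1, 1), hcol le_rfl (by omega)⟩) (z := ⟨(1, n), hcol (by omega) le_rfl⟩)
      (Subtype.coe_ne_coe.1 (by simp [w₀]; omega)) (Subtype.coe_ne_coe.1 (by simp [w₀]; omega))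
    obtain ⟨u, hu, hut⟩ := CGraph.exists_mem_support_snd_eq r (t := c + 1)
      (by show (1 : ℤ) ≤ c + 1; omega) (by show c + 1 ≤ n; omega)
    have hu₀ : u = w₀ :=
      Subtype.ext (Prod.ext (fst_eq_one_of_mem_cSet ha u.2 (by omega) (by omega)) hut)
    exact hr (hu₀ ▸ hu)
  · exact hcyc.isCycle.ncard_neighborSet_ne_one (hcyc.mem_support w) hw

/-- if C(m,n;k,l;c,d) satisfies a = m − k = 1 or has a vertex of
degree 1, then it has no Hamiltonian cycle. -/
theorem Cshaped_no_hamiltonian_cycle (m n k l c d : ℤ)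
    (hm : 2 ≤ m) (hn : 3 ≤ n) (hk : 1 ≤ k) (hl : 1 ≤ l) (hc : 1 ≤ c)
    (hd : d = n - l - c) (hd1 : 1 ≤ d) (ha : 1 ≤ m - k)
    (hF6 : m - k = 1 ∨ ∃ w : CSet m n k l c,
      ((CGraph m n k l c).neighborSet w).ncard = 1) :
    ¬ ∃ (v : CSet m n k l c) (cyc : (CGraph m n k l c).Walk v v),
        cyc.IsHamiltonianCycle :=
  Cshaped_no_hamiltonian_cycle_general m n k l c d hm hl hc hd hd1 hF6
end

section
/- Let G be a finite graph, C a cycle in G, and P a vertex-disjoint path in G from a to b. Suppose there is an edge (u, v) on C with u ~ a and v ~ b. Then G contains a cycle of length |V(C)| + |V(P)|. -/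
/-!
Cutting the cycle `C` at its edge `uv` leaves a path from `v` to `u` through all vertices of `C`.
Closing it up through `u ~ a`, the vertex-disjoint path `P` and `b ~ v` gives a cycle on
`V(C) ∪ V(P)`.
-/

namespace SimpleGraph.Walk

variable {V : Type*} {G : SimpleGraph V} {u v z : V}

theorem IsCycle.eq_snd_or_eq_penultimate_of_mem_edges {c : G.Walk u u} (hc : c.IsCycle)
    (h : s(u, v) ∈ c.edges) : v = c.snd ∨ v = c.penultimate := by
  cases c with
  | nil => exact absurd hc not_isCycle_nil
  | cons hadj p =>
    have hp : ¬p.Nil := not_nil_of_isCycle_cons hc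
    rw [edges_cons, List.mem_cons, Sym2.eq_iff] at h
    rcases h with (⟨-, rfl⟩ | ⟨rfl, -⟩) | h
    · exact .inl (snd_cons p hadj).symm
    · exact absurd rfl hadj.ne
    · right
      rw [penultimate_cons_of_not_nil _ _ hp]
      exact ((cons_isCycle_iff p hadj).1 hc).1.eq_penultimate_of_mem_edges h

theorem IsCycle.exists_isPath_of_mem_edges_s19 {c : G.Walk z z} (hc : c.IsCycle)
    (h : s(u, v) ∈ c.edges) :
    ∃ p : G.Walk v u, p.IsPath ∧ p.length + 1 = c.length ∧ p.support ⊆ c.support := by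
  classical
  have hu : u ∈ c.support := c.fst_mem_support_of_mem_edges h
  suffices ∀ d : G.Walk u u, d.IsCycle → s(u, v) ∈ d.edges →
      ∃ p : G.Walk v u, p.IsPath ∧ p.length + 1 = d.length ∧ p.support ⊆ d.support by
    obtain ⟨p, hp, hlen, hsupp⟩ :=
      this (c.rotate u hu) (hc.rotate hu) ((c.rotate_edges u hu).mem_iff.2 h)
    exact ⟨p, hp, hlen.trans (c.length_rotate u hu),
      fun w hw ↦ (c.mem_support_rotate_iff u hu).1 (hsupp hw)⟩
  intro d hd hdv
  have tail_path : ∀ e : G.Walk u u, e.IsCycle →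
      ∃ p : G.Walk e.snd u, p.IsPath ∧ p.length + 1 = e.length ∧ p.support ⊆ e.support :=
    fun e he ↦ ⟨e.tail, he.isPath_tail, length_tail_add_one he.not_nil, by
      simp [support_tail_of_not_nil _ he.not_nil, List.tail_subset]⟩
  rcases hd.eq_snd_or_eq_penultimate_of_mem_edges hdv with rfl | rfl
  · exact tail_path d hd
  -- Reversing the cycle turns its last edge into its first.
  · obtain ⟨p, hp, hlen, hsupp⟩ := tail_path d.reverse hd.reverse
    refine ⟨p.copy d.snd_reverse rfl, by simpa using hp, by simpa using hlen, ?_⟩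
    simpa using hsupp

end SimpleGraph.Walk

open SimpleGraph Walk

/-- combining a cycle C and a vertex-disjoint path P from a to b,
where an edge (u,v) of C satisfies u ~ a and v ~ b, yields a cycle with
|V(C)| + |V(P)| vertices, i.e. of length C.length + P.support.length. -/
theorem cycle_path_combination_length {V : Type*} (G : SimpleGraph V)
    {z a b : V} (C : G.Walk z z) (P : G.Walk a b)
    (hC : C.IsCycle) (hP : P.IsPath)
    (hdisj : ∀ v, v ∈ C.support → v ∉ P.support)
    (u v : V) (he : s(u, v) ∈ C.edges)
    (hua : G.Adj u a) (hvb : G.Adj v b) :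
    ∃ (w : V) (C' : G.Walk w w), C'.IsCycle ∧
      C'.length = C.length + P.support.length := by
  obtain ⟨R, hR, hRlen, hRC⟩ := hC.exists_isPath_of_mem_edges_s19 he
  have hu : u ∈ C.support := C.fst_mem_support_of_mem_edges he
  have hb : b ∉ R.support := fun hb ↦ hdisj b (hRC hb) P.end_mem_support
  refine ⟨u, (cons hua P).append (cons hvb.symm R), ?_, ?_⟩
  · refine (hP.cons (hdisj u hu)).isCycle_append (hR.cons hb) ?_ (.inr ?_)
    · rw [support_cons, support_cons, List.tail_cons, List.tail_cons]
      exact List.disjoint_left.2 fun x hxP hxR ↦ hdisj x (hRC hxR) hxP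
    · have := hC.three_le_length
      rw [length_cons]
      omega
  · rw [length_append, length_cons, length_cons, length_support]
    omega
end
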